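/- arXiv:1602.01697 — 2 statements merged into one kernel-verified Lean document; each statement's English description precedes it below -/
import Mathlib

section
/- If D is a directed graph of girth at least 5 with property S_k, then in the 3-tournament T_D any four vertices induce at least two triples sharing the same tail. -/
/-- A digraph `D` (given by its edge relation) has property `S_k`:
every set of `k` vertices is dominated by some vertex outside it. -/
def PropS {V : Type} (D : V → V → Prop) (k : ℕ) : Prop :=
  ∀ X : Finset V, X.card = k → ∃ v, v ∉ X ∧ ∀ x ∈ X, D v x

/-- The digraph `D` has girth at least `l`: no directed cycle of length `< l`. -/
def GirthAtLeast {V : Type} (D : V → V → Prop) (l : ℕ) : Prop :=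
  ∀ m : ℕ, 0 < m → m < l → ∀ c : ZMod m → V,
    Function.Injective c → ¬ (∀ i, D (c i) (c (i + 1)))

/-- A 3-tournament: every triple of vertices gets a designated tail belonging to it. -/
structure ThreeTournament (V : Type) where
  tail : Finset V → V
  tail_mem : ∀ A : Finset V, A.card = 3 → tail A ∈ A

/-- `X` dominates the 3-tournament `T`: every vertex outside `X`
lies in a triple whose tail is in `X`. -/
def Dominates {V : Type} (T : ThreeTournament V) (X : Finset V) : Prop :=
  ∀ v, v ∉ X → ∃ A : Finset V, A.card = 3 ∧ v ∈ A ∧ T.tail A ∈ X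

/-- `l` is a directed path in the subdigraph of `D` induced on `A`
(a nonempty list of distinct vertices of `A` with consecutive edges);
its length as a path is `l.length - 1`. -/
def IsPathOn {V : Type} (D : V → V → Prop) (A : Finset V) (l : List V) : Prop :=
  l ≠ [] ∧ l.Nodup ∧ (∀ x ∈ l, x ∈ A) ∧ l.Chain' D

/-- `x` is the starting vertex of a directed path of maximum length in `D[A]`. -/
def IsMaxPathStart {V : Type} (D : V → V → Prop) (A : Finset V) (x : V) : Prop :=
  ∃ l : List V, IsPathOn D A l ∧ l.head? = some x ∧
    ∀ l' : List V, IsPathOn D A l' → l'.length ≤ l.length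

/-- The defining property of the tail of the triple `A` in the tournament `T_D`:
`x` is the smallest (in the fixed linear order) starting vertex of a
maximum-length directed path in `D[A]`. -/
def TailSpec {V : Type} [LinearOrder V] (D : V → V → Prop) (A : Finset V) (x : V) : Prop :=
  IsMaxPathStart D A x ∧ ∀ y, IsMaxPathStart D A y → x ≤ y

/-!
Label the four triples of a 4-set `B` by the vertex they omit, and suppose their tails are
distinct, so that every vertex of `B` is the tail of exactly one triple. The tail of a triple
containing an edge has an out-neighbour in it, and `D[B]` is acyclic, so a sink `t` of `D[B]`
is the tail of an edgeless triple `B - w`: every edge of `D[B]` meets `w`. Two edgeless triples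
would leave at most one edge, and then two triples share a tail (the start of that edge, or the
minimum of `B`). So `t` is the only sink, which forces the edges of `D[B]` to be
`a → w`, `b → w`, `w → t`. The longest paths `a → w → t` and `b → w → t` make `a` and `b` the
tails of `B - b` and `B - a`, while the tail of `B - t` is `a` or `b`.
-/

open Finset Function

namespace GirthAtLeast

variable {V : Type} {D : V → V → Prop} {l : ℕ}

theorem le_minimalPeriod (hg : GirthAtLeast D l) {f : V → V} {x : V}
    (hx : x ∈ periodicPts f) (hf : ∀ n, D (f^[n] x) (f (f^[n] x))) :
    l ≤ minimalPeriod f x := by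
  by_contra! hlt
  set p := minimalPeriod f x
  have hp : 0 < p := minimalPeriod_pos_of_mem_periodicPts hx
  have : NeZero p := ⟨hp.ne'⟩
  refine hg p hp hlt (fun i => f^[i.val] x) ?_ fun i => ?_
  · intro i j hij
    exact ZMod.val_injective p
      (iterate_injOn_Iio_minimalPeriod (ZMod.val_lt i) (ZMod.val_lt j) hij)
  · have hval : (i + 1).val = (i.val + 1) % p := by
      rw [ZMod.val_add, ZMod.val_one_eq_one_mod, Nat.add_mod_mod]
    rw [hval, iterate_mod_minimalPeriod_eq, iterate_succ_apply']
    exact hf i.val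

theorem exists_sink (hg : GirthAtLeast D l) {B : Finset V} (hB : B.card < l)
    (hne : B.Nonempty) : ∃ t ∈ B, ∀ u ∈ B, ¬ D t u := by
  by_contra! h
  choose! f hfB hf using h
  obtain ⟨b, hb⟩ := hne
  have hmaps : ∀ n, f^[n] b ∈ B := fun n => Set.MapsTo.iterate (fun x hx => hfB x hx) n hb
  obtain ⟨i, hi, j, hj, hij, heq⟩ := exists_ne_map_eq_of_card_lt_of_maps_to
    (s := range (B.card + 1)) (by simp) (fun n _ => hmaps n)
  wlog hlt : i < j generalizing i j
  · exact this j hj i hi hij.symm heq.symm (lt_of_le_of_ne (not_lt.1 hlt) hij.symm)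
  have hper : IsPeriodicPt f (j - i) (f^[i] b) := by
    rw [IsPeriodicPt, IsFixedPt, ← iterate_add_apply, Nat.sub_add_cancel hlt.le, heq]
  have hpos : 0 < j - i := Nat.sub_pos_of_lt hlt
  have hle := hper.minimalPeriod_le hpos
  have hge := hg.le_minimalPeriod (mk_mem_periodicPts hpos hper)
    fun n => hf _ (by rw [← iterate_add_apply]; exact hmaps _)
  simp only [mem_range] at hj
  omega

theorem irrefl (hg : GirthAtLeast D l) (hl : 1 < l) (v : V) : ¬ D v v := by
  obtain ⟨t, ht, hsink⟩ := hg.exists_sink (B := {v}) (by simpa using hl) (by simp)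
  rw [mem_singleton] at ht
  exact ht ▸ hsink v (mem_singleton_self v)

theorem asymm (hg : GirthAtLeast D l) (hl : 2 < l) {u v : V} (huv : D u v) : ¬ D v u := by
  classical
  intro hvu
  obtain ⟨t, ht, hsink⟩ := hg.exists_sink (B := {u, v})
    (lt_of_le_of_lt (card_le_two) hl) (by simp)
  rcases mem_insert.1 ht with rfl | ht
  · exact hsink v (by simp) huv
  · rw [mem_singleton.1 ht] at hsink
    exact hsink u (by simp) hvu

end GirthAtLeast

section Paths

variable {V : Type} {D : V → V → Prop} {A : Finset V} {x : V}

theorem IsMaxPathStart.exists_path_cons (hx : IsMaxPathStart D A x) {l : List V}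
    (hl : IsPathOn D A l) : ∃ l', IsPathOn D A (x :: l') ∧ l.length ≤ l'.length + 1 := by
  obtain ⟨_ | ⟨y, l'⟩, hpath, hhead, hmax⟩ := hx
  · exact absurd rfl hpath.1
  · obtain rfl : y = x := by simpa using hhead
    exact ⟨l', hpath, hmax l hl⟩

theorem IsMaxPathStart.exists_adj (hx : IsMaxPathStart D A x) {u v : V} (hu : u ∈ A)
    (hv : v ∈ A) (huv : u ≠ v) (hD : D u v) : ∃ y ∈ A, D x y := by
  have hl : IsPathOn D A [u, v] :=
    ⟨by simp, by simpa using huv, by simp [hu, hv], .cons_cons hD (.singleton v)⟩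
  obtain ⟨_ | ⟨y, l'⟩, ⟨-, -, hmem, hchain⟩, hlen⟩ := hx.exists_path_cons hl
  · simp at hlen
  · exact ⟨y, hmem y (by simp), (List.isChain_cons_cons.1 hchain).1⟩

theorem IsMaxPathStart.exists_adj_adj (hx : IsMaxPathStart D A x) {u v w : V} (hu : u ∈ A)
    (hv : v ∈ A) (hw : w ∈ A) (huv : u ≠ v) (huw : u ≠ w) (hvw : v ≠ w) (huv' : D u v)
    (hvw' : D v w) : ∃ y ∈ A, ∃ z ∈ A, D x y ∧ D y z := by
  have hl : IsPathOn D A [u, v, w] :=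
    ⟨by simp, by simp [huv, huw, hvw], by simp [hu, hv, hw],
      .cons_cons huv' (.cons_cons hvw' (.singleton w))⟩
  obtain ⟨_ | ⟨y, _ | ⟨z, l'⟩⟩, ⟨-, -, hmem, hchain⟩, hlen⟩ := hx.exists_path_cons hl
  · simp at hlen
  · simp at hlen
  · obtain ⟨hxy, hyz⟩ := List.isChain_cons_cons.1 hchain
    exact ⟨y, hmem y (by simp), z, hmem z (by simp), hxy, (List.isChain_cons_cons.1 hyz).1⟩

theorem isMaxPathStart_of_forall_not_adj (hA : ∀ u ∈ A, ∀ v ∈ A, ¬ D u v) (hx : x ∈ A) :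
    IsMaxPathStart D A x := by
  refine ⟨[x], ⟨by simp, by simp, by simpa using hx, .singleton x⟩, rfl, ?_⟩
  rintro (_ | ⟨u, _ | ⟨v, l⟩⟩) ⟨-, -, hmem, hchain⟩
  · simp
  · simp
  · exact absurd (List.isChain_cons_cons.1 hchain).1
      (hA u (hmem u (by simp)) v (hmem v (by simp)))

end Paths

section Quadruple

variable {V : Type} [LinearOrder V] {D : V → V → Prop} {T : ThreeTournament V} {B : Finset V}

theorem card_erase_eq_three (hB : B.card = 4) {u : V} (hu : u ∈ B) : (B.erase u).card = 3 := by
  rw [card_erase_of_mem hu, hB]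

theorem tail_erase_mem (hB : B.card = 4) {u : V} (hu : u ∈ B) :
    T.tail (B.erase u) ∈ B.erase u :=
  T.tail_mem _ (card_erase_eq_three hB hu)

theorem exists_tail_erase_eq (hB : B.card = 4)
    (hinj : Set.InjOn (fun u => T.tail (B.erase u)) B) {v : V} (hv : v ∈ B) :
    ∃ w ∈ B, T.tail (B.erase w) = v :=
  surjOn_of_injOn_of_card_le _ (fun _ hu => mem_of_mem_erase (tail_erase_mem hB hu)) hinj
    le_rfl hv

theorem false_of_tail_erase_eq_on (hinj : Set.InjOn (fun u => T.tail (B.erase u)) B)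
    {S : Finset V} (hSB : S ⊆ B) (hS : 1 < S.card) {c : V}
    (hc : ∀ x ∈ S, T.tail (B.erase x) = c) : False := by
  obtain ⟨x, hx, y, hy, hxy⟩ := one_lt_card.1 hS
  exact hxy (hinj (hSB hx) (hSB hy) ((hc x hx).trans (hc y hy).symm))

theorem exists_independent_erase_of_sink (hg : GirthAtLeast D 5)
    (hT : ∀ A : Finset V, A.card = 3 → TailSpec D A (T.tail A)) (hB : B.card = 4)
    (hinj : Set.InjOn (fun u => T.tail (B.erase u)) B) {t : V} (ht : t ∈ B)
    (hsink : ∀ v ∈ B, ¬ D t v) :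
    ∃ w ∈ B, T.tail (B.erase w) = t ∧ ∀ u ∈ B.erase w, ∀ v ∈ B.erase w, ¬ D u v := by
  obtain ⟨w, hw, rfl⟩ := exists_tail_erase_eq hB hinj ht
  refine ⟨w, hw, rfl, fun u hu v hv huv => ?_⟩
  obtain rfl | hne := eq_or_ne u v
  · exact hg.irrefl (by norm_num) u huv
  obtain ⟨y, hy, hty⟩ := (hT _ (card_erase_eq_three hB hw)).1.exists_adj hu hv hne huv
  exact hsink y (mem_of_mem_erase hy) hty

theorem false_of_independent_erase_of_independent_erase (hg : GirthAtLeast D 5)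
    (hT : ∀ A : Finset V, A.card = 3 → TailSpec D A (T.tail A)) (hB : B.card = 4)
    (hinj : Set.InjOn (fun u => T.tail (B.erase u)) B) {w₁ w₂ : V} (hne : w₁ ≠ w₂)
    (h₁ : ∀ u ∈ B.erase w₁, ∀ v ∈ B.erase w₁, ¬ D u v)
    (h₂ : ∀ u ∈ B.erase w₂, ∀ v ∈ B.erase w₂, ¬ D u v) : False := by
  have hedge : ∀ u ∈ B, ∀ v ∈ B, D u v → (u = w₁ ∨ v = w₁) ∧ (u = w₂ ∨ v = w₂) := by
    intro u hu v hv huv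
    constructor <;> by_contra! h
    · exact h₁ u (mem_erase.2 ⟨h.1, hu⟩) v (mem_erase.2 ⟨h.2, hv⟩) huv
    · exact h₂ u (mem_erase.2 ⟨h.1, hu⟩) v (mem_erase.2 ⟨h.2, hv⟩) huv
  by_cases hE : ∃ p ∈ B, ∃ q ∈ B, D p q
  · obtain ⟨p, hp, q, hq, hpq⟩ := hE
    have hsrc : ∀ u ∈ B, ∀ v ∈ B, D u v → u = p := by
      intro u hu v hv huv
      have := hedge u hu v hv huv
      have := hedge p hp q hq hpq
      have := hg.asymm (by norm_num) huv
      grind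
    have hpq' : p ≠ q := fun h => hg.irrefl (by norm_num) p (h ▸ hpq)
    refine false_of_tail_erase_eq_on hinj (S := (B.erase p).erase q)
      ((erase_subset _ _).trans (erase_subset _ _)) ?_ (c := p) fun x hx => ?_
    · rw [card_erase_of_mem (mem_erase.2 ⟨hpq'.symm, hq⟩), card_erase_of_mem hp, hB]
      norm_num
    obtain ⟨hxq, hxp, hxB⟩ : x ≠ q ∧ x ≠ p ∧ x ∈ B := by simpa using hx
    obtain ⟨z, hz, hz'⟩ := (hT _ (card_erase_eq_three hB hxB)).1.exists_adj
      (mem_erase.2 ⟨hxp.symm, hp⟩) (mem_erase.2 ⟨hxq.symm, hq⟩) hpq' hpq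
    exact hsrc _ (mem_of_mem_erase (tail_erase_mem hB hxB)) z (mem_of_mem_erase hz) hz'
  · push Not at hE
    have hne : B.Nonempty := card_pos.1 (by omega)
    refine false_of_tail_erase_eq_on hinj (S := B.erase (B.min' hne)) (erase_subset _ _)
      (by rw [card_erase_eq_three hB (min'_mem _ _)]; norm_num) (c := B.min' hne) fun x hx => ?_
    have hxB := mem_of_mem_erase hx
    refine le_antisymm ((hT _ (card_erase_eq_three hB hxB)).2 _ ?_)
      (min'_le _ _ (mem_of_mem_erase (tail_erase_mem hB hxB)))
    exact isMaxPathStart_of_forall_not_adj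
      (fun u hu v hv => hE u (mem_of_mem_erase hu) v (mem_of_mem_erase hv))
      (mem_erase.2 ⟨(ne_of_mem_erase hx).symm, min'_mem _ _⟩)

theorem false_of_adj_through_hub
    (hT : ∀ A : Finset V, A.card = 3 → TailSpec D A (T.tail A)) (hB : B.card = 4)
    (hinj : Set.InjOn (fun u => T.tail (B.erase u)) B) {t w : V} (ht : t ∈ B) (hw : w ∈ B)
    (hwt_ne : w ≠ t) (hsink : ∀ v ∈ B, ¬ D t v) (hto : ∀ u ∈ B, u ≠ t → u ≠ w → D u w)
    (hfrom : ∀ v ∈ B, D w v → v = t) (hwt_adj : D w t) : False := by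
  set P := (B.erase t).erase w
  have hP : P.card = 2 := by
    rw [card_erase_of_mem (mem_erase.2 ⟨hwt_ne, hw⟩), card_erase_of_mem ht, hB]
  have hmemP : ∀ {v}, v ∈ P ↔ v ≠ w ∧ v ≠ t ∧ v ∈ B := by simp [P]
  set x := T.tail (B.erase t)
  obtain ⟨hxt, hxB⟩ : x ≠ t ∧ x ∈ B := mem_erase.1 (tail_erase_mem hB ht)
  have hxw : x ≠ w := by
    intro hxw
    obtain ⟨u, hu⟩ : P.Nonempty := card_pos.1 (by omega)
    obtain ⟨huw, hut, huB⟩ := hmemP.1 hu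
    obtain ⟨y, hy, hxy⟩ : ∃ y ∈ B.erase t, D x y :=
      (hT _ (card_erase_eq_three hB ht)).1.exists_adj (mem_erase.2 ⟨hut, huB⟩)
        (mem_erase.2 ⟨hwt_ne, hw⟩) huw (hto u huB hut huw)
    rw [hxw] at hxy
    exact ne_of_mem_erase hy (hfrom y (mem_of_mem_erase hy) hxy)
  have hxP : x ∈ P := hmemP.2 ⟨hxw, hxt, hxB⟩
  obtain ⟨u, hu⟩ : (P.erase x).Nonempty := card_pos.1 (by rw [card_erase_of_mem hxP]; omega)
  obtain ⟨hux, huP⟩ := mem_erase.1 hu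
  obtain ⟨huw, hut, huB⟩ := hmemP.1 huP
  -- `x → w → t` is a longest path in `B.erase u`, and only `x` can start one.
  obtain ⟨y, hy, z, hz, hτy, hyz⟩ := (hT _ (card_erase_eq_three hB huB)).1.exists_adj_adj
    (mem_erase.2 ⟨hux.symm, hxB⟩) (mem_erase.2 ⟨huw.symm, hw⟩) (mem_erase.2 ⟨hut.symm, ht⟩)
    hxw hxt hwt_ne (hto x hxB hxt hxw) hwt_adj
  have hτt : T.tail (B.erase u) ≠ t := fun h => hsink y (mem_of_mem_erase hy) (h ▸ hτy)
  have hτw : T.tail (B.erase u) ≠ w := fun h =>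
    hsink z (mem_of_mem_erase hz) (hfrom y (mem_of_mem_erase hy) (h ▸ hτy) ▸ hyz)
  obtain ⟨hτu, hτB⟩ := mem_erase.1 (tail_erase_mem hB huB)
  have hτx : T.tail (B.erase u) = x :=
    card_le_one.1 (by rw [card_erase_of_mem huP]; omega) _
      (mem_erase.2 ⟨hτu, hmemP.2 ⟨hτw, hτt, hτB⟩⟩) _ (mem_erase.2 ⟨hux.symm, hxP⟩)
  exact hut (hinj huB ht hτx)

theorem exists_ne_tail_erase_eq (hg : GirthAtLeast D 5)
    (hT : ∀ A : Finset V, A.card = 3 → TailSpec D A (T.tail A)) (hB : B.card = 4) :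
    ∃ u ∈ B, ∃ v ∈ B, u ≠ v ∧ T.tail (B.erase u) = T.tail (B.erase v) := by
  by_contra! hne
  have hinj : Set.InjOn (fun u => T.tail (B.erase u)) B := fun u hu v hv h =>
    by_contra fun huv => hne u hu v hv huv h
  obtain ⟨t, ht, hsink⟩ := hg.exists_sink (by omega : B.card < 5) (card_pos.1 (by omega))
  obtain ⟨w, hw, hwt, hI⟩ := exists_independent_erase_of_sink hg hT hB hinj ht hsink
  have hunique : ∀ s ∈ B, (∀ v ∈ B, ¬ D s v) → s = t := by
    intro s hs hsink'
    obtain ⟨w', -, rfl, hI'⟩ := exists_independent_erase_of_sink hg hT hB hinj hs hsink'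
    by_contra h
    refine false_of_independent_erase_of_independent_erase hg hT hB hinj ?_ hI hI'
    rintro rfl
    exact h hwt
  have hwt_ne : w ≠ t := hwt ▸ (ne_of_mem_erase (tail_erase_mem hB hw)).symm
  have hto : ∀ u ∈ B, u ≠ t → u ≠ w → D u w := by
    intro u hu hut huw
    obtain ⟨v, hv, huv⟩ : ∃ v ∈ B, D u v := by
      by_contra! h
      exact hut (hunique u hu h)
    by_contra huw'
    refine hI u (mem_erase.2 ⟨huw, hu⟩) v (mem_erase.2 ⟨?_, hv⟩) huv
    rintro rfl
    exact huw' huv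
  have hfrom : ∀ v ∈ B, D w v → v = t := by
    intro v hv hwv
    by_contra hvt
    have hvw : v ≠ w := by
      rintro rfl
      exact hg.irrefl (by norm_num) v hwv
    exact hg.asymm (by norm_num) hwv (hto v hv hvt hvw)
  have hwt_adj : D w t := by
    obtain ⟨v, hv, hwv⟩ : ∃ v ∈ B, D w v := by
      by_contra! h
      exact hwt_ne (hunique w hw h)
    exact hfrom v hv hwv ▸ hwv
  exact false_of_adj_through_hub hT hB hinj ht hw hwt_ne hsink hto hfrom hwt_adj

end Quadruple

theorem stmt1_general {V : Type} [LinearOrder V] (D : V → V → Prop)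
    (hg : GirthAtLeast D 5)
    (T : ThreeTournament V) (hT : ∀ A : Finset V, A.card = 3 → TailSpec D A (T.tail A)) :
    ∀ B : Finset V, B.card = 4 →
      ∃ A₁ A₂ : Finset V, A₁ ⊆ B ∧ A₂ ⊆ B ∧ A₁.card = 3 ∧ A₂.card = 3 ∧
        A₁ ≠ A₂ ∧ T.tail A₁ = T.tail A₂ := by
  intro B hB
  obtain ⟨u, hu, v, hv, huv, htail⟩ := exists_ne_tail_erase_eq hg hT hB
  exact ⟨B.erase u, B.erase v, erase_subset _ _, erase_subset _ _, card_erase_eq_three hB hu,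
    card_erase_eq_three hB hv, fun h => huv ((erase_inj B hu).1 h), htail⟩

/-- If `D` has girth at least 5 and property `S_k`, then in the 3-tournament `T_D`
any four vertices induce at least two triples sharing the same tail. -/
theorem stmt1 {V : Type} [Fintype V] [LinearOrder V] (D : V → V → Prop) (k : ℕ)
    (hg : GirthAtLeast D 5) (hS : PropS D k)
    (T : ThreeTournament V) (hT : ∀ A : Finset V, A.card = 3 → TailSpec D A (T.tail A)) :
    ∀ B : Finset V, B.card = 4 →
      ∃ A₁ A₂ : Finset V, A₁ ⊆ B ∧ A₂ ⊆ B ∧ A₁.card = 3 ∧ A₂.card = 3 ∧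
        A₁ ≠ A₂ ∧ T.tail A₁ = T.tail A₂ :=
  stmt1_general D hg T hT
end

section
/- In a finite acyclic digraph with at least one edge, if x is the starting vertex of a directed path of maximum length whose first edge is xy, then there is no directed path of length 2 ending at y. -/
/-- `D` has no directed cycle. -/
def Acyclic {V : Type} (D : V → V → Prop) : Prop :=
  ∀ m : ℕ, 0 < m → ∀ c : ZMod m → V, Function.Injective c →
    ¬ (∀ i, D (c i) (c (i + 1)))

/-- `l` is a directed path in `D` (its length as a path is `l.length - 1`). -/
def IsPath {V : Type} (D : V → V → Prop) (l : List V) : Prop :=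
  l ≠ [] ∧ l.Nodup ∧ l.Chain' D

/-! An edge from a vertex of a path back to its first vertex would close a directed cycle, so in an
acyclic digraph every in-neighbour of the first vertex of a path lies off the path and extends it.
Applied to `w → y` and then `u → w`, this turns the tail `y :: l` of the maximum path `x :: y :: l`
into the longer path `u :: w :: y :: l`. -/

namespace Acyclic

variable {V : Type} {D : V → V → Prop}

theorem not_rel_getLast_head (hac : Acyclic D) {p : List V} (hp : p ≠ []) (hnd : p.Nodup)
    (hch : p.IsChain D) : ¬ D (p.getLast hp) (p.head hp) := by
  intro hback
  have hn : 0 < p.length := List.length_pos_iff.mpr hp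
  have : NeZero p.length := ⟨hn.ne'⟩
  have hcyc : ∀ i (hi : i < p.length), D p[i] (p[(i + 1) % p.length]'(Nat.mod_lt _ hn)) := by
    intro i hi
    rcases Nat.lt_or_ge (i + 1) p.length with hlt | hge
    · simpa [Nat.mod_eq_of_lt hlt] using List.isChain_iff_getElem.mp hch i hlt
    · obtain rfl : i = p.length - 1 := by omega
      simpa [Nat.sub_add_cancel hn, List.getLast_eq_getElem, List.head_eq_getElem] using hback
  refine hac p.length hn (fun i => p[i.val]'(ZMod.val_lt i))
    (fun i j h => ZMod.val_injective _ (hnd.getElem_inj_iff.mp h)) fun i => ?_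
  simpa [ZMod.val_add, ZMod.val_one_eq_one_mod, Nat.add_mod_mod] using hcyc i.val (ZMod.val_lt i)

theorem not_rel_head_of_mem (hac : Acyclic D) {a v : V} {l : List V} (hnd : (a :: l).Nodup)
    (hch : (a :: l).IsChain D) (hv : v ∈ a :: l) : ¬ D v a := by
  obtain ⟨s, t, hst⟩ := List.append_of_mem hv
  have hpre : s ++ [v] <+: a :: l := ⟨t, by simp [hst]⟩
  simpa [List.getLast_concat, hpre.head] using
    hac.not_rel_getLast_head (by simp) (hnd.sublist hpre.sublist) (hch.prefix hpre)

theorem isPath_cons (hac : Acyclic D) {a v : V} {l : List V} (hp : IsPath D (a :: l))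
    (hva : D v a) : IsPath D (v :: a :: l) :=
  ⟨List.cons_ne_nil _ _,
    List.nodup_cons.mpr ⟨fun hv => hac.not_rel_head_of_mem hp.2.1 hp.2.2 hv hva, hp.2.1⟩,
    List.isChain_cons_cons.mpr ⟨hva, hp.2.2⟩⟩

end Acyclic

theorem IsPath.tail {V : Type} {D : V → V → Prop} {a b : V} {l : List V}
    (hp : IsPath D (a :: b :: l)) : IsPath D (b :: l) :=
  ⟨List.cons_ne_nil _ _, hp.2.1.of_cons, hp.2.2.tail⟩

theorem stmt11_general {V : Type} (D : V → V → Prop) (hac : Acyclic D)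
    (x y : V) (l : List V) (hp : IsPath D (x :: y :: l))
    (hmax : ∀ l' : List V, IsPath D l' → l'.length ≤ (x :: y :: l).length) :
    ¬ ∃ u w : V, IsPath D [u, w, y] := by
  rintro ⟨u, w, -, -, huwy⟩
  obtain ⟨huw, hwy⟩ := List.isChain_cons_cons.mp huwy
  have hwyl : IsPath D (w :: y :: l) := hac.isPath_cons hp.tail (List.isChain_pair.mp hwy)
  simpa using hmax _ (hac.isPath_cons hwyl huw)

/-- In a finite acyclic digraph, if `x :: y :: l` is a directed path of maximum
length (so the first edge is `xy`), then there is no directed path of length 2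
ending at `y`. -/
theorem stmt11 {V : Type} [Fintype V] (D : V → V → Prop) (hac : Acyclic D)
    (x y : V) (l : List V) (hp : IsPath D (x :: y :: l))
    (hmax : ∀ l' : List V, IsPath D l' → l'.length ≤ (x :: y :: l).length) :
    ¬ ∃ u w : V, IsPath D [u, w, y] :=
  stmt11_general D hac x y l hp hmax
end
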